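/- (Parseval's relation for the Mellin transform) Let f, g : ℝ → ℂ be Schwartz functions and c ∈ (0,2). Then ∫₀^∞ ω·f(ω)·g(ω) dω = (1/(2π)) ∫_ℝ M(f)(2−c−iλ)·M(g)(c+iλ) dλ, where M(h)(s) = ∫₀^∞ h(ω) ω^{s−1} dω, and all integrals converge absolutely. -/

import Mathlib

/-!
Substituting `ω = exp (-u)` turns the Mellin transform into a Fourier transform:
`M(h)(σ + iλ) = 𝓕 h_σ (λ / 2π)` with `h_σ u = exp (-σ u) h (exp (-u))` (`expPullback σ h`).
Since `f_{2-c} g_c = (f g)_2`, the left-hand side is `∫ f_{2-c} g_c`, and the Fourier Parseval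
identity `∫ F G = ∫ 𝓕 F (-ξ) 𝓕 G ξ` (self-adjointness of `𝓕` plus inversion for `F`) becomes the
claim after the change of variables `ξ = λ / 2π`.

Inversion needs `𝓕 f_σ` integrable: the first two derivatives of `f_σ` are combinations of
`f_σ`, `(f')_{σ+1}`, `(f'')_{σ+2}`, all integrable since the weights are positive, so
`(1 + ξ²) ‖𝓕 f_σ ξ‖` is bounded.
-/

open MeasureTheory Complex Set

open scoped FourierTransform Real SchwartzMap

section Fourier

variable {V : Type*} [NormedAddCommGroup V] [InnerProductSpace ℝ V] [FiniteDimensional ℝ V]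
  [MeasurableSpace V] [BorelSpace V] {f g : V → ℂ}

theorem integral_fourier_mul_eq_integral_mul_fourier (hf : Integrable f) (hg : Integrable g) :
    ∫ ξ, 𝓕 f ξ * g ξ = ∫ x, f x * 𝓕 g x := by
  simpa using! VectorFourier.integral_fourierIntegral_smul_eq_flip (L := innerₗ V)
    Real.continuous_fourierChar continuous_inner hf hg

theorem integral_mul_eq_integral_fourier_neg_mul_fourier (hf : Integrable f)
    (hf' : Integrable (𝓕 f)) (hfc : Continuous f) (hg : Integrable g) :
    ∫ x, f x * g x = ∫ ξ, 𝓕 f (-ξ) * 𝓕 g ξ := by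
  have hinv : Integrable (𝓕⁻ f) := by
    rw [funext (Real.fourierInv_eq_fourier_neg f)]
    exact hf'.comp_neg
  calc ∫ x, f x * g x = ∫ x, g x * 𝓕 (𝓕⁻ f) x := by
        simp_rw [hfc.fourier_fourierInv_eq hf hf', mul_comm]
    _ = ∫ ξ, 𝓕 g ξ * 𝓕⁻ f ξ := (integral_fourier_mul_eq_integral_mul_fourier hg hinv).symm
    _ = ∫ ξ, 𝓕 f (-ξ) * 𝓕 g ξ := by simp_rw [Real.fourierInv_eq_fourier_neg, mul_comm]

theorem norm_le_integral_norm_fourier (hf : Integrable f) (hf' : Integrable (𝓕 f))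
    (hfc : Continuous f) (x : V) : ‖f x‖ ≤ ∫ ξ, ‖𝓕 f ξ‖ :=
  calc ‖f x‖ = ‖𝓕⁻ (𝓕 f) x‖ := by rw [hfc.fourierInv_fourier_eq hf hf']
    _ ≤ ∫ ξ, ‖𝓕 f ξ‖ := VectorFourier.norm_fourierIntegral_le_integral_norm _ _ _ _ _

end Fourier

variable {E : Type*} [NormedAddCommGroup E] [NormedSpace ℂ E]

theorem integrable_fourier_of_integrable_deriv_deriv {f : ℝ → E} (hf : Integrable f)
    (hf' : Integrable (deriv f)) (hf'' : Integrable (deriv (deriv f)))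
    (hd : Differentiable ℝ f) (hd' : Differentiable ℝ (deriv f)) : Integrable (𝓕 f) := by
  have hfourier (ξ : ℝ) : 𝓕 (deriv (deriv f)) ξ = (2 * π * I * ξ) ^ 2 • 𝓕 f ξ := by
    rw [Real.fourier_deriv hf' hd' hf'', Real.fourier_deriv hf hd hf']
    simp only [smul_smul, sq]
  have hbound (ξ : ℝ) :
      ‖𝓕 f ξ‖ ≤ ((∫ x, ‖f x‖) + ∫ x, ‖deriv (deriv f) x‖) * (1 + ξ ^ 2)⁻¹ := by
    have h0 : ‖𝓕 f ξ‖ ≤ ∫ x, ‖f x‖ :=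
      VectorFourier.norm_fourierIntegral_le_integral_norm _ _ _ _ _
    have h2 : (2 * π) ^ 2 * ξ ^ 2 * ‖𝓕 f ξ‖ ≤ ∫ x, ‖deriv (deriv f) x‖ := by
      have hnorm : ‖𝓕 (deriv (deriv f)) ξ‖ = (2 * π) ^ 2 * ξ ^ 2 * ‖𝓕 f ξ‖ := by
        rw [hfourier, norm_smul, norm_pow]
        simp [abs_of_pos Real.pi_pos, mul_pow]
      exact hnorm ▸ VectorFourier.norm_fourierIntegral_le_integral_norm _ _ _ _ _
    have h1 : ξ ^ 2 * ‖𝓕 f ξ‖ ≤ (2 * π) ^ 2 * ξ ^ 2 * ‖𝓕 f ξ‖ := by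
      rw [mul_assoc]
      exact le_mul_of_one_le_left (by positivity) (by nlinarith [Real.pi_gt_three])
    rw [le_mul_inv_iff₀ (by positivity)]
    linarith
  have hcont : Continuous (𝓕 f) :=
    VectorFourier.fourierIntegral_continuous Real.continuous_fourierChar continuous_inner hf
  exact (integrable_inv_one_add_sq.const_mul _).mono' hcont.aestronglyMeasurable
    (ae_of_all _ hbound)

noncomputable def expPullback (σ : ℝ) (f : ℝ → E) (u : ℝ) : E :=
  Real.exp (-σ * u) • f (Real.exp (-u))

section ExpPullback

variable {f : ℝ → E} {σ : ℝ}

theorem mellin_eq_fourier_expPullback (s : ℂ) :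
    mellin f s = 𝓕 (expPullback s.re f) (s.im / (2 * π)) :=
  mellin_eq_fourier f

theorem mellin_sub_mul_I_eq_fourier (y : ℝ) :
    mellin f (σ - y * I) = 𝓕 (expPullback σ f) (-(y / (2 * π))) := by
  simp [mellin_eq_fourier_expPullback, neg_div]

theorem mellin_add_mul_I_eq_fourier (y : ℝ) :
    mellin f (σ + y * I) = 𝓕 (expPullback σ f) (y / (2 * π)) := by
  simp [mellin_eq_fourier_expPullback]

theorem mellinConvergent_iff_integrable_expPullback :
    MellinConvergent f σ ↔ Integrable (expPullback σ f) := by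
  have hderiv : ∀ u ∈ univ, HasDerivWithinAt (Real.exp ∘ Neg.neg) (-Real.exp (-u)) univ u :=
    fun u _ => mul_neg_one (Real.exp (-u)) ▸
      ((Real.hasDerivAt_exp (-u)).comp u (hasDerivAt_neg u)).hasDerivWithinAt
  have himage : Real.exp ∘ Neg.neg '' univ = Ioi 0 := by
    rw [image_comp, image_univ_of_surjective neg_surjective, image_univ, Real.range_exp]
  rw [MellinConvergent, ← himage, integrableOn_image_iff_integrableOn_abs_deriv_smul
    MeasurableSet.univ hderiv (Real.exp_injective.injOn.comp neg_injective.injOn (mapsTo_univ _ _)),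
    integrableOn_univ]
  refine integrable_congr (ae_of_all _ fun u => ?_)
  have hpow : ((Real.exp (-u) : ℝ) : ℂ) ^ ((σ : ℂ) - 1) = ((Real.exp (-u * (σ - 1)) : ℝ) : ℂ) := by
    rw [← ofReal_one, ← ofReal_sub, ← ofReal_cpow (Real.exp_pos _).le, Real.exp_mul]
  simp only [Function.comp_apply, expPullback, abs_neg, abs_of_pos (Real.exp_pos _), hpow]
  rw [Complex.coe_smul, smul_smul, ← Real.exp_add]
  ring_nf

theorem verticalIntegrable_mellin_iff :
    VerticalIntegrable (mellin f) σ ↔ Integrable (𝓕 (expPullback σ f)) := by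
  simp only [VerticalIntegrable, mellin_add_mul_I_eq_fourier, div_eq_mul_inv]
  exact integrable_comp_mul_right_iff _ (by positivity)

theorem continuous_expPullback (hf : ContinuousOn f (Ioi 0)) (σ : ℝ) :
    Continuous (expPullback σ f) :=
  (by fun_prop : Continuous fun u => Real.exp (-σ * u)).smul
    (hf.comp_continuous (by fun_prop) fun u => Real.exp_pos (-u))

theorem hasDerivAt_expPullback {f' : ℝ → E} (hf : ∀ x, HasDerivAt f (f' x) x) (σ u : ℝ) :
    HasDerivAt (expPullback σ f) (-σ • expPullback σ f u - expPullback (σ + 1) f' u) u := by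
  have hexp : HasDerivAt (fun u => Real.exp (-σ * u)) (-σ * Real.exp (-σ * u)) u := by
    simpa [mul_comm] using ((hasDerivAt_id u).const_mul (-σ)).exp
  have hcomp : HasDerivAt (fun u => f (Real.exp (-u))) (-Real.exp (-u) • f' (Real.exp (-u))) u :=
    (hf (Real.exp (-u))).scomp u (by simpa using (hasDerivAt_neg u).exp)
  have hsplit : Real.exp (-(σ + 1) * u) = Real.exp (-σ * u) * Real.exp (-u) := by
    rw [← Real.exp_add]; ring_nf
  refine (hexp.smul hcomp).congr_deriv ?_
  simp only [expPullback, hsplit]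
  module

theorem deriv_expPullback {f' : ℝ → E} (hf : ∀ x, HasDerivAt f (f' x) x) (σ : ℝ) :
    deriv (expPullback σ f) = fun u => -σ • expPullback σ f u - expPullback (σ + 1) f' u :=
  funext fun u => (hasDerivAt_expPullback hf σ u).deriv

end ExpPullback

namespace SchwartzMap

variable (f : 𝓢(ℝ, E))

theorem mellinConvergent {s : ℂ} (hs : 0 < s.re) : MellinConvergent f s := by
  refine mellinConvergent_of_isBigO_rpow (a := s.re + 1) (b := 0)
    (f.continuous.locallyIntegrable.locallyIntegrableOn _) ?_ (by linarith) ?_ (by simpa)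
  · refine ((f.isBigO_cocompact_rpow (-(s.re + 1))).mono atTop_le_cocompact).congr'
      Filter.EventuallyEq.rfl ?_
    filter_upwards [Filter.eventually_ge_atTop 0] with x hx
    rw [Real.norm_of_nonneg hx]
  · simp only [neg_zero, Real.rpow_zero]
    exact ((f.continuous.tendsto 0).mono_left nhdsWithin_le_nhds).isBigO_one ℝ

theorem integrable_expPullback {σ : ℝ} (hσ : 0 < σ) : Integrable (expPullback σ f) :=
  mellinConvergent_iff_integrable_expPullback.1 (f.mellinConvergent (by simpa))

theorem hasDerivAt_expPullback (σ u : ℝ) :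
    HasDerivAt (expPullback σ f)
      (-σ • expPullback σ f u - expPullback (σ + 1) (derivCLM ℝ E f) u) u :=
  _root_.hasDerivAt_expPullback f.hasDerivAt σ u

theorem integrable_deriv_expPullback {σ : ℝ} (hσ : 0 < σ) :
    Integrable (deriv (expPullback σ f)) := by
  rw [deriv_expPullback f.hasDerivAt]
  exact ((f.integrable_expPullback hσ).smul _).sub
    ((derivCLM ℝ E f).integrable_expPullback (by linarith))

theorem integrable_fourier_expPullback {σ : ℝ} (hσ : 0 < σ) :
    Integrable (𝓕 (expPullback σ f)) := by
  have hderiv2 (u : ℝ) : HasDerivAt (deriv (expPullback σ f))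
      (-σ • deriv (expPullback σ f) u - deriv (expPullback (σ + 1) (derivCLM ℝ E f)) u) u := by
    nth_rewrite 1 [deriv_expPullback f.hasDerivAt σ]
    exact ((f.hasDerivAt_expPullback σ u).differentiableAt.hasDerivAt.const_smul (-σ)).sub
      ((derivCLM ℝ E f).hasDerivAt_expPullback (σ + 1) u).differentiableAt.hasDerivAt
  refine integrable_fourier_of_integrable_deriv_deriv (f.integrable_expPullback hσ)
    (f.integrable_deriv_expPullback hσ) ?_
    (fun u => (f.hasDerivAt_expPullback σ u).differentiableAt)
    (fun u => (hderiv2 u).differentiableAt)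
  rw [funext fun u => (hderiv2 u).deriv]
  exact ((f.integrable_deriv_expPullback hσ).smul _).sub
    ((derivCLM ℝ E f).integrable_deriv_expPullback (by linarith))

theorem verticalIntegrable_mellin {σ : ℝ} (hσ : 0 < σ) : VerticalIntegrable (mellin f) σ :=
  verticalIntegrable_mellin_iff.2 (f.integrable_fourier_expPullback hσ)

end SchwartzMap

section Parseval

variable {f g : ℝ → ℂ} {a b : ℝ}

theorem integrable_mellin_mul_mellin (hf : MellinConvergent f a)
    (hg : VerticalIntegrable (mellin g) b) :
    Integrable (fun y : ℝ => mellin f (a - y * I) * mellin g (b + y * I)) := by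
  rw [mellinConvergent_iff_integrable_expPullback] at hf
  simp only [mellin_sub_mul_I_eq_fourier]
  refine hg.bdd_mul (c := ∫ u, ‖expPullback a f u‖) ?_ (ae_of_all _ fun y =>
    VectorFourier.norm_fourierIntegral_le_integral_norm _ _ _ _ _)
  exact ((VectorFourier.fourierIntegral_continuous Real.continuous_fourierChar continuous_inner
    hf).comp (by fun_prop)).aestronglyMeasurable

theorem hasMellin_mul (hf : MellinConvergent f a) (hfv : VerticalIntegrable (mellin f) a)
    (hfc : ContinuousOn f (Ioi 0)) (hg : MellinConvergent g b) :
    HasMellin (fun t => f t * g t) (a + b : ℝ)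
      (((1 / (2 * π) : ℝ) : ℂ) * ∫ y : ℝ, mellin f (a - y * I) * mellin g (b + y * I)) := by
  rw [mellinConvergent_iff_integrable_expPullback] at hf hg
  rw [verticalIntegrable_mellin_iff] at hfv
  have hFc := continuous_expPullback hfc a
  have hmul : expPullback (a + b) (fun t => f t * g t) =
      fun u => expPullback a f u * expPullback b g u := by
    ext u
    simp only [expPullback, Complex.real_smul]
    rw [neg_add, add_mul, Real.exp_add, ofReal_mul]
    ring
  refine ⟨?_, ?_⟩
  · rw [mellinConvergent_iff_integrable_expPullback, hmul]
    exact hg.bdd_mul (c := ∫ ξ, ‖𝓕 (expPullback a f) ξ‖) hFc.aestronglyMeasurable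
      (ae_of_all _ (norm_le_integral_norm_fourier hf hfv hFc))
  · rw [mellin_eq_fourier_expPullback]
    simp only [ofReal_re, ofReal_im, zero_div, hmul, mellin_sub_mul_I_eq_fourier,
      mellin_add_mul_I_eq_fourier]
    rw [Real.fourier_real_eq]
    simp only [mul_zero, neg_zero, AddChar.map_zero_eq_one, one_smul]
    have hsubst := Measure.integral_comp_div
      (fun ξ => 𝓕 (expPullback a f) (-ξ) * 𝓕 (expPullback b g) ξ) (2 * π)
    rw [integral_mul_eq_integral_fourier_neg_mul_fourier hf hfv hFc hg, hsubst,
      abs_of_pos Real.two_pi_pos, real_smul, ← mul_assoc, ← ofReal_mul,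
      one_div_mul_cancel Real.two_pi_pos.ne', ofReal_one, one_mul]

end Parseval

/-- Parseval's relation for the Mellin transform: for Schwartz
functions `f, g` and `c ∈ (0,2)`,
`∫₀^∞ ω·f(ω)·g(ω) dω = (1/(2π)) ∫_ℝ M(f)(2−c−iλ)·M(g)(c+iλ) dλ`,
all integrals converging absolutely. -/
theorem mellin_parseval_schwartz (f g : SchwartzMap ℝ ℂ) (c : ℝ) (hc0 : 0 < c)
    (hc2 : c < 2) :
    let M : (ℝ → ℂ) → ℂ → ℂ := fun h s => ∫ ω in Ioi (0 : ℝ), h ω * (ω : ℂ) ^ (s - 1)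
    IntegrableOn (fun ω : ℝ => (ω : ℂ) * f ω * g ω) (Ioi 0) ∧
      (∀ l : ℝ, IntegrableOn
          (fun ω : ℝ => f ω * (ω : ℂ) ^ ((2 : ℂ) - c - (l : ℂ) * Complex.I - 1)) (Ioi 0)) ∧
      (∀ l : ℝ, IntegrableOn
          (fun ω : ℝ => g ω * (ω : ℂ) ^ ((c : ℂ) + (l : ℂ) * Complex.I - 1)) (Ioi 0)) ∧
      Integrable
        (fun l : ℝ =>
          M f ((2 : ℂ) - c - (l : ℂ) * Complex.I) * M g ((c : ℂ) + (l : ℂ) * Complex.I)) ∧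
      (∫ ω in Ioi (0 : ℝ), (ω : ℂ) * f ω * g ω) =
        ((1 / (2 * Real.pi) : ℝ) : ℂ) *
          ∫ l : ℝ,
            M f ((2 : ℂ) - c - (l : ℂ) * Complex.I) * M g ((c : ℂ) + (l : ℂ) * Complex.I) := by
  intro M
  have hM : M = mellin := by
    ext h s
    exact setIntegral_congr_fun measurableSet_Ioi fun ω _ => mul_comm _ _
  have hconv (h : 𝓢(ℝ, ℂ)) (s : ℂ) (hs : 0 < s.re) :
      IntegrableOn (fun ω : ℝ => h ω * (ω : ℂ) ^ (s - 1)) (Ioi 0) := by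
    simpa only [MellinConvergent, smul_eq_mul, mul_comm] using h.mellinConvergent hs
  have h2c : 0 < 2 - c := by linarith
  have hf : MellinConvergent f (2 - c : ℝ) := f.mellinConvergent (by simpa)
  have hparseval := hasMellin_mul hf (f.verticalIntegrable_mellin h2c) f.continuous.continuousOn
    (g.mellinConvergent (s := c) (by simpa))
  have hint := integrable_mellin_mul_mellin hf (g.verticalIntegrable_mellin hc0)
  rw [sub_add_cancel, ofReal_ofNat] at hparseval
  simp only [ofReal_sub, ofReal_ofNat] at hparseval hint
  rw [hM]
  refine ⟨?_, fun l => hconv f _ (by simpa using h2c), fun l => hconv g _ (by simpa), hint, ?_⟩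
  · refine hparseval.1.congr_fun (fun t _ => ?_) measurableSet_Ioi
    norm_num [mul_assoc]
  · rw [← hparseval.2]
    refine setIntegral_congr_fun measurableSet_Ioi (fun t _ => ?_)
    norm_num [mul_assoc]
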